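/- arXiv:1102.2424 — 9 statements merged into one kernel-verified Lean document; each statement's English description precedes it below -/
import Mathlib

section
/- Let n ≥ 2 be an integer and a_1, …, a_n real numbers. Then for any two distinct indices m, l ∈ {1, …, n} one has 2·a_m·a_l ≥ (∑_{i=1}^n a_i)²/(n−1) − ∑_{i=1}^n a_i². -/
open Finset

section MergedPair

variable {ι : Type*} [DecidableEq ι] {s : Finset ι} {m l : ι}

lemma sum_eq_add_add_sum_erase_erase {M : Type*} [AddCommMonoid M] (f : ι → M)
    (hm : m ∈ s) (hl : l ∈ s) (hml : m ≠ l) :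
    ∑ i ∈ s, f i = f m + f l + ∑ i ∈ (s.erase l).erase m, f i := by
  rw [← add_sum_erase s f hl, ← add_sum_erase (s.erase l) f (mem_erase.2 ⟨hml, hm⟩)]
  abel

/-- Cauchy–Schwarz over the `#s - 1` terms obtained by merging `a m` and `a l` into one. -/
lemma sq_sum_le_card_sub_one_mul_merge (a : ι → ℝ) (hm : m ∈ s) (hl : l ∈ s)
    (hml : m ≠ l) :
    (∑ i ∈ s, a i) ^ 2 ≤
      ((#s : ℝ) - 1) * ((a m + a l) ^ 2 + ∑ i ∈ (s.erase l).erase m, a i ^ 2) := by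
  set b := Function.update a m (a m + a l)
  have hbm : b m = a m + a l := Function.update_self ..
  have hmt : m ∈ s.erase l := mem_erase.2 ⟨hml, hm⟩
  have hb_rest : ∀ i ∈ (s.erase l).erase m, b i = a i := fun i hi =>
    Function.update_of_ne (ne_of_mem_erase hi) _ _
  have hsum : ∑ i ∈ s.erase l, b i = ∑ i ∈ s, a i := by
    rw [← add_sum_erase _ b hmt, sum_congr rfl hb_rest, hbm,
      sum_eq_add_add_sum_erase_erase a hm hl hml]
  have hsq : ∑ i ∈ s.erase l, b i ^ 2 =
      (a m + a l) ^ 2 + ∑ i ∈ (s.erase l).erase m, a i ^ 2 := by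
    rw [← add_sum_erase _ _ hmt, sum_congr rfl fun i hi => by rw [hb_rest i hi], hbm]
  have hcard : (#(s.erase l) : ℝ) = #s - 1 := by
    rw [card_erase_of_mem hl, Nat.cast_pred (card_pos.2 ⟨l, hl⟩)]
  simpa only [hsum, hsq, hcard] using sq_sum_le_card_mul_sum_sq (s := s.erase l) (f := b)

lemma two_mul_mul_ge_sq_sum_div_sub_sum_sq (a : ι → ℝ) (hm : m ∈ s) (hl : l ∈ s)
    (hml : m ≠ l) :
    2 * a m * a l ≥ (∑ i ∈ s, a i) ^ 2 / ((#s : ℝ) - 1) - ∑ i ∈ s, a i ^ 2 := by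
  have hcard : (1 : ℝ) < #s := by exact_mod_cast one_lt_card.2 ⟨m, hm, l, hl, hml⟩
  have hmerge := sq_sum_le_card_sub_one_mul_merge a hm hl hml
  rw [sum_eq_add_add_sum_erase_erase (fun i => a i ^ 2) hm hl hml, ge_iff_le,
    sub_le_iff_le_add, div_le_iff₀ (by linarith)]
  linarith

end MergedPair

theorem stmt_0_general (n : ℕ) (a : ℕ → ℝ) (m l : ℕ)
    (hm : m < n) (hl : l < n) (hml : m ≠ l) :
    2 * a m * a l ≥ (∑ i ∈ Finset.range n, a i) ^ 2 / ((n : ℝ) - 1)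
      - ∑ i ∈ Finset.range n, (a i) ^ 2 := by
  simpa only [card_range] using
    two_mul_mul_ge_sq_sum_div_sub_sum_sq a (mem_range.2 hm) (mem_range.2 hl) hml

theorem stmt_0 (n : ℕ) (hn : 2 ≤ n) (a : ℕ → ℝ) (m l : ℕ)
    (hm : m < n) (hl : l < n) (hml : m ≠ l) :
    2 * a m * a l ≥ (∑ i ∈ Finset.range n, a i) ^ 2 / ((n : ℝ) - 1)
      - ∑ i ∈ Finset.range n, (a i) ^ 2 :=
  stmt_0_general n a m l hm hl hml
end

section
/- Let n ≥ 2 be an integer, a_1, …, a_n real numbers, and m ≠ l two indices. Then 2·a_m·a_l = (∑_{i=1}^n a_i)²/(n−1) − ∑_{i=1}^n a_i² holds if and only if a_i = a_m + a_l for every i ∉ {m, l}. -/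
/-! Merging the entries `a m` and `a l` into the single entry `a m + a l` gives `n - 1`
numbers with the same sum `S` and with sum of squares `∑ aᵢ² + 2 a_m a_l`. For any `N` numbers
`bᵢ`, `∑ bᵢ² - (∑ bᵢ)² / N = ∑ (bᵢ - mean)²`, which vanishes exactly when all `bᵢ` are equal;
applied to the merged family this is the claimed equality case. -/

open Finset

namespace Finset

variable {ι R : Type*}

/-- Thanks to the convention `x / 0 = 0`, no hypothesis on `#s` is needed. -/
theorem sum_sub_sum_div_card_sq [Field R] (s : Finset ι) (f : ι → R) :
    ∑ i ∈ s, (f i - (∑ j ∈ s, f j) / #s) ^ 2 = ∑ i ∈ s, f i ^ 2 - (∑ i ∈ s, f i) ^ 2 / #s := by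
  have expand : ∀ i ∈ s, (f i - (∑ j ∈ s, f j) / #s) ^ 2
      = f i ^ 2 - 2 * ((∑ j ∈ s, f j) / #s) * f i + ((∑ j ∈ s, f j) / #s) ^ 2 :=
    fun i _ => by ring
  rw [sum_congr rfl expand, sum_add_distrib, sum_sub_distrib, ← mul_sum, sum_const, nsmul_eq_mul]
  by_cases hs : (#s : R) = 0
  · simp [hs]
  · field_simp
    ring

theorem sum_sq_eq_sq_sum_div_card_iff [Field R] [LinearOrder R] [IsStrictOrderedRing R]
    {s : Finset ι} {f : ι → R} {j : ι} (hj : j ∈ s) :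
    ∑ i ∈ s, f i ^ 2 = (∑ i ∈ s, f i) ^ 2 / #s ↔ ∀ i ∈ s, f i = f j := by
  have hcard : (#s : R) ≠ 0 := Nat.cast_ne_zero.mpr (card_ne_zero_of_mem hj)
  have iff_eq_mean : ∑ i ∈ s, f i ^ 2 = (∑ i ∈ s, f i) ^ 2 / #s ↔
      ∀ i ∈ s, f i = (∑ j ∈ s, f j) / #s := by
    rw [← sub_eq_zero, ← sum_sub_sum_div_card_sq,
      sum_eq_zero_iff_of_nonneg fun i _ => sq_nonneg _]
    simp only [sq_eq_zero_iff, sub_eq_zero]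
  rw [iff_eq_mean]
  constructor
  · intro h i hi
    rw [h i hi, h j hj]
  · intro h i hi
    rw [sum_congr rfl h, sum_const, nsmul_eq_mul, mul_div_cancel_left₀ _ hcard, h i hi]

theorem sum_erase_update_add [DecidableEq ι] {M : Type*} [AddCommGroup M] {t : Finset ι}
    {m l : ι} (hm : m ∈ t) (hl : l ∈ t) (hml : m ≠ l) (g : ι → M) (x : M) :
    ∑ i ∈ t.erase l, Function.update g m x i = ∑ i ∈ t, g i - g m - g l + x := by
  rw [sum_update_of_mem (mem_erase.mpr ⟨hml, hm⟩), sdiff_singleton_eq_erase,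
    ← add_sum_erase t g hl, ← add_sum_erase (t.erase l) g (mem_erase.mpr ⟨hml, hm⟩)]
  abel

end Finset

theorem stmt_1_general (n : ℕ) (a : ℕ → ℝ) (m l : ℕ)
    (hm : m < n) (hl : l < n) (hml : m ≠ l) :
    2 * a m * a l = (∑ i ∈ Finset.range n, a i) ^ 2 / ((n : ℝ) - 1)
      - ∑ i ∈ Finset.range n, (a i) ^ 2
    ↔ ∀ i < n, i ≠ m → i ≠ l → a i = a m + a l := by
  have hl' : l ∈ range n := mem_range.mpr hl
  have hm' : m ∈ range n := mem_range.mpr hm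
  set s := (range n).erase l
  set b := Function.update a m (a m + a l)
  have hcard : (#s : ℝ) = n - 1 := by
    rw [card_erase_of_mem hl', card_range, Nat.cast_pred (by omega)]
  have hsum : ∑ i ∈ s, b i = ∑ i ∈ range n, a i := by
    rw [sum_erase_update_add hm' hl' hml]
    ring
  have hsq : ∑ i ∈ s, b i ^ 2 = ∑ i ∈ range n, a i ^ 2 + 2 * a m * a l := by
    have hb : ∀ i, b i ^ 2 = Function.update (fun i => a i ^ 2) m ((a m + a l) ^ 2) i :=
      Function.apply_update (fun _ x => x ^ 2) a m (a m + a l)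
    rw [sum_congr rfl fun i _ => hb i, sum_erase_update_add hm' hl' hml]
    ring
  have merged : 2 * a m * a l = (∑ i ∈ range n, a i) ^ 2 / ((n : ℝ) - 1)
      - ∑ i ∈ range n, a i ^ 2 ↔ ∑ i ∈ s, b i ^ 2 = (∑ i ∈ s, b i) ^ 2 / #s := by
    rw [hsq, hsum, hcard]
    constructor <;> intro h <;> linarith
  rw [merged, sum_sq_eq_sq_sum_div_card_iff (mem_erase.mpr ⟨hml, hm'⟩)]
  refine forall_congr' fun i => ?_
  by_cases him : i = m
  · simp [him, b, hm, hml]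
  · simp only [mem_erase, mem_range, b, Function.update_self, Function.update_of_ne him]
    tauto

theorem stmt_1 (n : ℕ) (hn : 2 ≤ n) (a : ℕ → ℝ) (m l : ℕ)
    (hm : m < n) (hl : l < n) (hml : m ≠ l) :
    2 * a m * a l = (∑ i ∈ Finset.range n, a i) ^ 2 / ((n : ℝ) - 1)
      - ∑ i ∈ Finset.range n, (a i) ^ 2
    ↔ ∀ i < n, i ≠ m → i ≠ l → a i = a m + a l :=
  stmt_1_general n a m l hm hl hml
end

section
/- Let n ≥ 4 be an integer and a_1, …, a_n real numbers. Then for any four pairwise distinct indices p, q, m, l ∈ {1, …, n} one has 2·a_p·a_q + 2·a_m·a_l ≥ (∑_{i=1}^n a_i)²/(n−2) − ∑_{i=1}^n a_i². -/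
/-!
Merging the entries `a p, a q` into the single entry `a p + a q`, and likewise `a m, a l`,
leaves the total sum unchanged, shrinks the number of entries to `n - 2`, and raises the sum of
squares by exactly `2 a p a q + 2 a m a l`. Cauchy–Schwarz on the `n - 2` merged entries gives the
inequality.
-/

open Finset Function

namespace Finset

variable {ι : Type*} [DecidableEq ι] {s : Finset ι} {p q : ι}

theorem sum_erase_update_add_s2 {M : Type*} [AddCommMonoid M] (hp : p ∈ s) (hq : q ∈ s)
    (hpq : p ≠ q) (a : ι → M) :
    ∑ i ∈ s.erase q, update a p (a p + a q) i = ∑ i ∈ s, a i := by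
  have hp' : p ∈ s.erase q := mem_erase.2 ⟨hpq, hp⟩
  rw [sum_update_of_mem hp', sdiff_singleton_eq_erase, ← add_sum_erase s a hq,
    ← add_sum_erase _ a hp', add_comm (a p), add_assoc]

theorem sum_sq_erase_update_add {R : Type*} [CommSemiring R] (hp : p ∈ s) (hq : q ∈ s)
    (hpq : p ≠ q) (a : ι → R) :
    ∑ i ∈ s.erase q, update a p (a p + a q) i ^ 2 = ∑ i ∈ s, a i ^ 2 + 2 * a p * a q := by
  have hp' : p ∈ s.erase q := mem_erase.2 ⟨hpq, hp⟩
  rw [← add_sum_erase _ _ hp', update_self,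
    sum_congr rfl fun i hi => by rw [update_of_ne (ne_of_mem_erase hi)],
    ← add_sum_erase s _ hq, ← add_sum_erase _ _ hp']
  ring

theorem sq_sum_le_card_sub_two_mul {m l : ι} (hp : p ∈ s) (hq : q ∈ s) (hm : m ∈ s)
    (hl : l ∈ s) (hpq : p ≠ q) (hpm : p ≠ m) (hpl : p ≠ l) (hqm : q ≠ m) (hql : q ≠ l)
    (hml : m ≠ l) (a : ι → ℝ) :
    (∑ i ∈ s, a i) ^ 2 ≤ (#s - 2 : ℝ) * (∑ i ∈ s, a i ^ 2 + 2 * a p * a q + 2 * a m * a l) := by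
  set b := update a p (a p + a q)
  have hbm : b m = a m := update_of_ne hpm.symm _ _
  have hbl : b l = a l := update_of_ne hpl.symm _ _
  have hm' : m ∈ s.erase q := mem_erase.2 ⟨hqm.symm, hm⟩
  have hl' : l ∈ s.erase q := mem_erase.2 ⟨hql.symm, hl⟩
  have hsum := sum_erase_update_add_s2 hm' hl' hml b
  have hsq := sum_sq_erase_update_add hm' hl' hml b
  rw [sum_erase_update_add_s2 hp hq hpq a, hbm, hbl] at hsum
  rw [sum_sq_erase_update_add hp hq hpq a, hbm, hbl] at hsq
  have hcard : (#((s.erase q).erase l) : ℝ) = #s - 2 := by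
    have h : #((s.erase q).erase l) + 2 = #s := by
      rw [← card_erase_add_one hq, ← card_erase_add_one hl']
    rw [← h]
    push_cast
    ring
  rw [← hsum, ← hsq, ← hcard]
  exact sq_sum_le_card_mul_sum_sq

end Finset

theorem stmt_2 (n : ℕ) (hn : 4 ≤ n) (a : ℕ → ℝ) (p q m l : ℕ)
    (hp : p < n) (hq : q < n) (hm : m < n) (hl : l < n)
    (hpq : p ≠ q) (hpm : p ≠ m) (hpl : p ≠ l) (hqm : q ≠ m) (hql : q ≠ l) (hml : m ≠ l) :
    2 * a p * a q + 2 * a m * a l ≥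
      (∑ i ∈ Finset.range n, a i) ^ 2 / ((n : ℝ) - 2)
        - ∑ i ∈ Finset.range n, (a i) ^ 2 := by
  have hbound := sq_sum_le_card_sub_two_mul (mem_range.2 hp) (mem_range.2 hq) (mem_range.2 hm)
    (mem_range.2 hl) hpq hpm hpl hqm hql hml a
  rw [card_range] at hbound
  have hn2 : (0 : ℝ) < n - 2 := by
    have : (4 : ℝ) ≤ n := by exact_mod_cast hn
    linarith
  rw [ge_iff_le, sub_le_iff_le_add, div_le_iff₀ hn2]
  linarith
end

section
/- Let n ≥ 3 and let h = (h_{ij}) be a real symmetric n×n matrix. Set S = ∑_{i,j=1}^n h_{ij}² and H = (1/n)·∑_{i=1}^n h_{ii}. Then for every integer k with 1 ≤ k ≤ n−1, ∑_{i=1}^k (h_{ii}·h_{nn} − h_{in}²) ≥ (k/2)·(n²H²/(n−1) − S). -/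
/-!
It suffices to bound each term: for `i ≠ p` (here `p = n - 1`) and `A` the remaining indices,
`S ≥ ∑_j h_jj² + 2 h_ip²`, so the claim `2 (h_ii h_pp - h_ip²) ≥ (∑ h_jj)² / (n - 1) - S` follows
from `(∑ h_jj)² ≤ (n - 1) ((h_ii + h_pp)² + ∑_{j ∈ A} h_jj²)`, which is Cauchy–Schwarz for the
`n - 1` numbers `h_ii + h_pp` and `h_jj`, `j ∈ A`.
-/

open Finset

namespace Finset

variable {ι : Type*} [DecidableEq ι] {s : Finset ι} {i p : ι}

theorem sum_eq_add_add_sum_erase_erase (hi : i ∈ s) (hp : p ∈ s) (hip : i ≠ p) (f : ι → ℝ) :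
    ∑ j ∈ s, f j = f i + f p + ∑ j ∈ (s.erase p).erase i, f j := by
  rw [← add_sum_erase s f hp, ← add_sum_erase _ f (mem_erase.2 ⟨hip, hi⟩)]
  ring

theorem sq_sum_le_card_sub_one_mul (hi : i ∈ s) (hp : p ∈ s) (hip : i ≠ p) (d : ι → ℝ) :
    (∑ j ∈ s, d j) ^ 2
      ≤ ((#s : ℝ) - 1) * ((d i + d p) ^ 2 + ∑ j ∈ (s.erase p).erase i, d j ^ 2) := by
  set A := (s.erase p).erase i
  set g := Function.update d i (d i + d p)
  have hg : ∀ j ∈ A, g j = d j := fun j hj => Function.update_of_ne (ne_of_mem_erase hj) _ _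
  have hgi : g i = d i + d p := Function.update_self ..
  have hi' : i ∈ s.erase p := mem_erase.2 ⟨hip, hi⟩
  have hsum : ∑ j ∈ s, d j = ∑ j ∈ s.erase p, g j := by
    rw [sum_eq_add_add_sum_erase_erase hi hp hip, ← add_sum_erase _ _ hi', sum_congr rfl hg, hgi]
  have hsumsq : ∑ j ∈ s.erase p, g j ^ 2 = (d i + d p) ^ 2 + ∑ j ∈ A, d j ^ 2 := by
    rw [← add_sum_erase _ _ hi', sum_congr rfl fun j hj => by rw [hg j hj], hgi]
  have hcard : (#(s.erase p) : ℝ) = #s - 1 := by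
    rw [card_erase_of_mem hp, Nat.cast_pred (card_pos.2 ⟨p, hp⟩)]
  rw [hsum, ← hsumsq, ← hcard]
  exact sq_sum_le_card_mul_sum_sq

theorem sq_add_sq_add_sum_sq_diag_le_sum_sum_sq (hi : i ∈ s) (hp : p ∈ s) (hip : i ≠ p)
    (h : ι → ι → ℝ) :
    h i i ^ 2 + h i p ^ 2 + (h p p ^ 2 + h p i ^ 2) + ∑ j ∈ (s.erase p).erase i, h j j ^ 2
      ≤ ∑ j ∈ s, ∑ q ∈ s, h j q ^ 2 := by
  have row_pair : ∀ {j q}, j ∈ s → q ∈ s → j ≠ q → h j j ^ 2 + h j q ^ 2 ≤ ∑ r ∈ s, h j r ^ 2 :=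
    fun {j q} hj hq hjq => by
      rw [← sum_pair (f := fun r => h j r ^ 2) hjq]
      exact sum_le_sum_of_subset_of_nonneg (insert_subset hj (singleton_subset_iff.2 hq))
        fun _ _ _ => sq_nonneg _
  have rows_rest : ∑ j ∈ (s.erase p).erase i, h j j ^ 2
      ≤ ∑ j ∈ (s.erase p).erase i, ∑ q ∈ s, h j q ^ 2 :=
    sum_le_sum fun j hj => single_le_sum (f := fun q => h j q ^ 2) (fun _ _ => sq_nonneg _)
      (mem_of_mem_erase (mem_of_mem_erase hj))
  rw [sum_eq_add_add_sum_erase_erase hi hp hip]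
  linarith [row_pair hi hp hip, row_pair hp hi hip.symm]

theorem principal_minor_two_ge (hi : i ∈ s) (hp : p ∈ s) (hip : i ≠ p) (h : ι → ι → ℝ)
    (hsymm : h p i = h i p) :
    (1 / 2) * ((∑ j ∈ s, h j j) ^ 2 / ((#s : ℝ) - 1) - ∑ j ∈ s, ∑ q ∈ s, h j q ^ 2)
      ≤ h i i * h p p - h i p ^ 2 := by
  have hcard : (1 : ℝ) < #s := by
    exact_mod_cast one_lt_card.2 ⟨i, hi, p, hp, hip⟩
  have hCS : (∑ j ∈ s, h j j) ^ 2 / ((#s : ℝ) - 1)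
      ≤ (h i i + h p p) ^ 2 + ∑ j ∈ (s.erase p).erase i, h j j ^ 2 := by
    rw [div_le_iff₀ (by linarith), mul_comm]
    exact sq_sum_le_card_sub_one_mul hi hp hip fun j => h j j
  have hS := sq_add_sq_add_sum_sq_diag_le_sum_sum_sq hi hp hip h
  rw [hsymm] at hS
  nlinarith

end Finset

theorem stmt_3_general (n : ℕ) (h : ℕ → ℕ → ℝ)
    (hsymm : ∀ i j, h i j = h j i)
    (S H : ℝ)
    (hS : S = ∑ i ∈ Finset.range n, ∑ j ∈ Finset.range n, (h i j) ^ 2)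
    (hH : H = (∑ i ∈ Finset.range n, h i i) / n)
    (k : ℕ) (hk2 : k ≤ n - 1) :
    ∑ i ∈ Finset.range k, (h i i * h (n - 1) (n - 1) - (h i (n - 1)) ^ 2)
      ≥ ((k : ℝ) / 2) * ((n : ℝ) ^ 2 * H ^ 2 / ((n : ℝ) - 1) - S) := by
  have hminor : ∀ i ∈ range k, (1 / 2) * ((n : ℝ) ^ 2 * H ^ 2 / ((n : ℝ) - 1) - S)
      ≤ h i i * h (n - 1) (n - 1) - h i (n - 1) ^ 2 := by
    intro i hi
    have hik : i < n - 1 := (mem_range.1 hi).trans_le hk2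
    have hn : (n : ℝ) ≠ 0 := by exact_mod_cast (show n ≠ 0 by omega)
    have htrace : (n : ℝ) ^ 2 * H ^ 2 = (∑ j ∈ range n, h j j) ^ 2 := by
      rw [hH]; field_simp
    simpa only [htrace, hS, card_range] using
      principal_minor_two_ge (mem_range.2 (by omega)) (mem_range.2 (by omega)) hik.ne h
        (hsymm _ _)
  calc ((k : ℝ) / 2) * ((n : ℝ) ^ 2 * H ^ 2 / ((n : ℝ) - 1) - S)
      = ∑ _i ∈ range k, (1 / 2) * ((n : ℝ) ^ 2 * H ^ 2 / ((n : ℝ) - 1) - S) := by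
        rw [sum_const, card_range, nsmul_eq_mul]; ring
    _ ≤ _ := sum_le_sum hminor

theorem stmt_3 (n : ℕ) (hn : 3 ≤ n) (h : ℕ → ℕ → ℝ)
    (hsymm : ∀ i j, h i j = h j i)
    (S H : ℝ)
    (hS : S = ∑ i ∈ Finset.range n, ∑ j ∈ Finset.range n, (h i j) ^ 2)
    (hH : H = (∑ i ∈ Finset.range n, h i i) / n)
    (k : ℕ) (hk1 : 1 ≤ k) (hk2 : k ≤ n - 1) :
    ∑ i ∈ Finset.range k, (h i i * h (n - 1) (n - 1) - (h i (n - 1)) ^ 2)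
      ≥ ((k : ℝ) / 2) * ((n : ℝ) ^ 2 * H ^ 2 / ((n : ℝ) - 1) - S) :=
  stmt_3_general n h hsymm S H hS hH k hk2
end

section
/- Let n ≥ 4 and let h = (h_{ij}) be a real symmetric n×n matrix with trace T = ∑_i h_{ii} and squared norm S = ∑_{i,j} h_{ij}². Then h_{11}h_{33} + h_{22}h_{44} + h_{22}h_{33} + h_{11}h_{44} − h_{13}² − h_{23}² − h_{24}² − h_{14}² − 2(h_{13}h_{24} − h_{14}h_{23}) ≥ T²/(n−2) − S. -/
/-!
Split the trace as `T = D + R`, where `D` is the trace of the upper-left `4 × 4` block and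
`R` the sum of the remaining `n - 4` diagonal entries. Inside the block, completing squares gives
`D² / 2 ≤ L + (block part of S)`, where `L` is the left-hand side; the other diagonal entries
contribute their squares to `S`. Cauchy–Schwarz applied to the `n - 2` numbers
`D/2, D/2, h₄₄, …` then gives `T² ≤ (n - 2) (L + S)`.
-/

open Finset

theorem sq_add_sum_le_card_add_two_mul {ι : Type*} (s : Finset ι) (x : ℝ) (f : ι → ℝ) :
    (x + ∑ i ∈ s, f i) ^ 2 ≤ (#s + 2) * (x ^ 2 / 2 + ∑ i ∈ s, f i ^ 2) := by
  have cs := sq_sum_le_card_mul_sum_sq (s := s.insertNone.insertNone)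
    (f := fun o => o.elim (x / 2) fun o => o.elim (x / 2) f)
  simp only [sum_insertNone, card_insertNone, Option.elim] at cs
  push_cast at cs
  linarith

theorem sum_block_add_sum_diag_le {k n : ℕ} (hk : k ≤ n) {f : ℕ → ℕ → ℝ}
    (hf : ∀ i j, 0 ≤ f i j) :
    ∑ i ∈ range k, ∑ j ∈ range k, f i j + ∑ i ∈ Ico k n, f i i
      ≤ ∑ i ∈ range n, ∑ j ∈ range n, f i j := by
  rw [← sum_range_add_sum_Ico _ hk]
  gcongr with i hi i hi
  · exact fun j _ _ => hf i j
  · exact single_le_sum (fun j _ => hf i j) (by simp at hi ⊢; omega)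

def curvatureTerm (h : ℕ → ℕ → ℝ) : ℝ :=
  h 0 0 * h 2 2 + h 1 1 * h 3 3 + h 1 1 * h 2 2 + h 0 0 * h 3 3
    - (h 0 2) ^ 2 - (h 1 2) ^ 2 - (h 1 3) ^ 2 - (h 0 3) ^ 2
    - 2 * (h 0 2 * h 1 3 - h 0 3 * h 1 2)

/-- The difference of the two sides is
`(h₀₀ - h₁₁)²/2 + (h₂₂ - h₃₃)²/2 + (h₀₂ - h₁₃)² + (h₀₃ + h₁₂)² + 2 h₀₁² + 2 h₂₃²`. -/
theorem sq_sum_diag_div_two_le {h : ℕ → ℕ → ℝ} (hsymm : ∀ i j, h i j = h j i) :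
    (∑ i ∈ range 4, h i i) ^ 2 / 2 ≤ curvatureTerm h + ∑ i ∈ range 4, ∑ j ∈ range 4, h i j ^ 2 := by
  simp only [sum_range_succ, sum_range_zero, zero_add, curvatureTerm,
    hsymm 1 0, hsymm 2 0, hsymm 3 0, hsymm 2 1, hsymm 3 1, hsymm 3 2]
  linarith [sq_nonneg (h 0 0 - h 1 1), sq_nonneg (h 2 2 - h 3 3),
    sq_nonneg (h 0 2 - h 1 3), sq_nonneg (h 0 3 + h 1 2), sq_nonneg (h 0 1), sq_nonneg (h 2 3)]

theorem stmt_7 (n : ℕ) (hn : 4 ≤ n) (h : ℕ → ℕ → ℝ)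
    (hsymm : ∀ i j, h i j = h j i)
    (T S : ℝ)
    (hT : T = ∑ i ∈ Finset.range n, h i i)
    (hS : S = ∑ i ∈ Finset.range n, ∑ j ∈ Finset.range n, (h i j) ^ 2) :
    h 0 0 * h 2 2 + h 1 1 * h 3 3 + h 1 1 * h 2 2 + h 0 0 * h 3 3
      - (h 0 2) ^ 2 - (h 1 2) ^ 2 - (h 1 3) ^ 2 - (h 0 3) ^ 2
      - 2 * (h 0 2 * h 1 3 - h 0 3 * h 1 2)
      ≥ T ^ 2 / ((n : ℝ) - 2) - S := by
  have hn2 : (0 : ℝ) < n - 2 := by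
    have : (4 : ℝ) ≤ n := by exact_mod_cast hn
    linarith
  have hcard : (#(Ico 4 n) : ℝ) + 2 = n - 2 := by
    rw [Nat.card_Ico, Nat.cast_sub hn]
    ring
  have hT_le : T ^ 2 ≤ (n - 2) * (curvatureTerm h + S) := by
    calc T ^ 2 = (∑ i ∈ range 4, h i i + ∑ i ∈ Ico 4 n, h i i) ^ 2 := by
          rw [hT, sum_range_add_sum_Ico _ hn]
      _ ≤ (n - 2) * ((∑ i ∈ range 4, h i i) ^ 2 / 2 + ∑ i ∈ Ico 4 n, h i i ^ 2) := by
          rw [← hcard]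
          exact sq_add_sum_le_card_add_two_mul _ _ _
      _ ≤ (n - 2) * (curvatureTerm h + S) := by
          have hS_ge := sum_block_add_sum_diag_le hn (f := fun i j => h i j ^ 2)
            fun _ _ => sq_nonneg _
          have hblock := sq_sum_diag_div_two_le hsymm
          exact mul_le_mul_of_nonneg_left (by linarith) hn2.le
  change T ^ 2 / _ - S ≤ curvatureTerm h
  rw [sub_le_iff_le_add, div_le_iff₀ hn2]
  linarith
end

section
/- Let n ≥ 4 and let h = (h_{ij}) be a real symmetric n×n matrix with trace T = ∑_i h_{ii} and squared norm S = ∑_{i,j} h_{ij}². Then h_{11}h_{33} + h_{22}h_{33} − (3/2)h_{13}² − (3/2)h_{23}² − (1/2)h_{24}² − (1/2)h_{14}² ≥ T²/(n−1) − S. -/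
/-!
Write `a i = h i i`. Cauchy–Schwarz over `n - 1` numbers, after merging `a m` and `a l` into one
entry, gives `T² / (n - 1) ≤ ∑ a i ² + 2 a m a l` for `m ≠ l`; averaging the cases `(m, l) = (0, 2)`
and `(1, 2)` bounds `T² / (n - 1)` by `∑ a i ² + a 0 a 2 + a 1 a 2`. On the other side, `S` exceeds
`∑ a i ²` by the off-diagonal squares, which by symmetry contain
`2 (h 0 2 ² + h 1 2 ² + h 0 3 ² + h 1 3 ²)`.
-/

open Finset

variable {ι : Type*} [DecidableEq ι]

theorem sq_sum_le_card_sub_one_mul_sum_sq_add_two_mul {s : Finset ι} {m l : ι} (hm : m ∈ s)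
    (hl : l ∈ s) (hml : m ≠ l) (a : ι → ℝ) :
    (∑ i ∈ s, a i) ^ 2 ≤ ((#s : ℝ) - 1) * (∑ i ∈ s, a i ^ 2 + 2 * a m * a l) := by
  set g : ι → ℝ := fun i => a i + if i = l then a m else 0
  have hl_erase : l ∈ s.erase m := mem_erase.2 ⟨hml.symm, hl⟩
  have hsum : ∑ i ∈ s.erase m, g i = ∑ i ∈ s, a i := by
    rw [sum_add_distrib, sum_ite_eq' _ _ _, if_pos hl_erase, ← add_sum_erase s a hm]
    ring
  have hsumsq : ∑ i ∈ s.erase m, g i ^ 2 = ∑ i ∈ s, a i ^ 2 + 2 * a m * a l := by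
    simp only [g, add_sq, sum_add_distrib, ite_pow, mul_ite, mul_zero, zero_pow two_ne_zero,
      sum_ite_eq', if_pos hl_erase, ← add_sum_erase s (a · ^ 2) hm]
    ring
  have hcard : ((#(s.erase m) : ℕ) : ℝ) = (#s : ℝ) - 1 := by
    rw [card_erase_of_mem hm, Nat.cast_sub (card_pos.2 ⟨m, hm⟩), Nat.cast_one]
  simpa only [hsum, hsumsq, hcard] using sq_sum_le_card_mul_sum_sq (s := s.erase m) (f := g)

theorem sum_sum_eq_sum_diag_add_sum_offDiag {M : Type*} [AddCommMonoid M] (s : Finset ι)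
    (f : ι → ι → M) :
    ∑ i ∈ s, ∑ j ∈ s, f i j = ∑ i ∈ s, f i i + ∑ p ∈ s.offDiag, f p.1 p.2 := by
  rw [← sum_product', ← diag_union_offDiag, sum_union (disjoint_diag_offDiag _), sum_diag]

theorem sum_sq_le_of_subset_offDiag {s : Finset ι} {P : Finset (ι × ι)} (hP : P ⊆ s.offDiag)
    (h : ι → ι → ℝ) :
    ∑ p ∈ P, h p.1 p.2 ^ 2 ≤ ∑ i ∈ s, ∑ j ∈ s, h i j ^ 2 - ∑ i ∈ s, h i i ^ 2 := by
  rw [sum_sum_eq_sum_diag_add_sum_offDiag, add_sub_cancel_left]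
  exact sum_le_sum_of_subset_of_nonneg hP fun _ _ _ => sq_nonneg _

theorem stmt_8 (n : ℕ) (hn : 4 ≤ n) (h : ℕ → ℕ → ℝ)
    (hsymm : ∀ i j, h i j = h j i)
    (T S : ℝ)
    (hT : T = ∑ i ∈ Finset.range n, h i i)
    (hS : S = ∑ i ∈ Finset.range n, ∑ j ∈ Finset.range n, (h i j) ^ 2) :
    h 0 0 * h 2 2 + h 1 1 * h 2 2
      - (3 / 2) * (h 0 2) ^ 2 - (3 / 2) * (h 1 2) ^ 2
      - (1 / 2) * (h 1 3) ^ 2 - (1 / 2) * (h 0 3) ^ 2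
      ≥ T ^ 2 / ((n : ℝ) - 1) - S := by
  have mem : ∀ k < 4, k ∈ range n := fun k hk => mem_range.2 (by omega)
  have h02 := sq_sum_le_card_sub_one_mul_sum_sq_add_two_mul (mem 0 (by norm_num))
    (mem 2 (by norm_num)) (by norm_num) (fun i => h i i)
  have h12 := sq_sum_le_card_sub_one_mul_sum_sq_add_two_mul (mem 1 (by norm_num))
    (mem 2 (by norm_num)) (by norm_num) (fun i => h i i)
  have hoff := sum_sq_le_of_subset_offDiag (s := range n)
    (P := {(0, 2), (2, 0), (1, 2), (2, 1), (0, 3), (3, 0), (1, 3), (3, 1)})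
    (by simp only [insert_subset_iff, singleton_subset_iff, mem_offDiag, mem_range]; omega) h
  simp only [card_range, ← hT, ← hS] at h02 h12 hoff
  simp (disch := decide) only [sum_insert, sum_singleton, hsymm 2 0, hsymm 2 1, hsymm 3 0,
    hsymm 3 1] at hoff
  have hpos : (0 : ℝ) < n - 1 := by
    have : (4 : ℝ) ≤ n := by exact_mod_cast hn
    linarith
  have hdiv :
      T ^ 2 / ((n : ℝ) - 1) ≤ ∑ i ∈ range n, h i i ^ 2 + h 0 0 * h 2 2 + h 1 1 * h 2 2 := by
    rw [div_le_iff₀ hpos]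
    linarith
  linarith [sq_nonneg (h 0 2), sq_nonneg (h 1 2), sq_nonneg (h 0 3), sq_nonneg (h 1 3)]
end

section
/- Let n ≥ 3 and let h = (h_{ij}) be a real symmetric n×n matrix with trace T = ∑_i h_{ii} and squared norm S = ∑_{i,j} h_{ij}². Then ∑_{k=2}^n [2h_{1k}² − h_{11}h_{kk}] ≤ ((n−1)/2)·(S − T²/(n−1)). -/
/-! Splitting off the first row and column, with `a = h₀₀`, `P = ∑_{k ≥ 1} h₀ₖ²`, `t` and `Q`
the trace and squared norm of the lower-right block, symmetry gives `T = a + t` and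
`S = a² + 2P + Q`. After clearing denominators the claim becomes
`0 ≤ (n - 2) a² + 2 (n - 3) P + ((n - 1) Q - t²)`; each term is nonnegative, the last one by
Cauchy–Schwarz on the diagonal of the block. -/

open Finset

lemma sq_sum_diag_le_card_mul_sum_sq (s : Finset ℕ) (h : ℕ → ℕ → ℝ) :
    (∑ k ∈ s, h k k) ^ 2 ≤ #s * ∑ i ∈ s, ∑ j ∈ s, h i j ^ 2 := by
  calc (∑ k ∈ s, h k k) ^ 2 ≤ #s * ∑ k ∈ s, h k k ^ 2 := sq_sum_le_card_mul_sum_sq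
    _ ≤ #s * ∑ i ∈ s, ∑ j ∈ s, h i j ^ 2 := by
      gcongr with i hi
      exact single_le_sum (f := fun j ↦ h i j ^ 2) (fun _ _ ↦ sq_nonneg _) hi

lemma sum_sq_eq_corner_add_border_add_block {n : ℕ} (hn : 0 < n) (h : ℕ → ℕ → ℝ)
    (hsymm : ∀ i j, h i j = h j i) :
    ∑ i ∈ range n, ∑ j ∈ range n, h i j ^ 2
      = h 0 0 ^ 2 + 2 * ∑ k ∈ Ico 1 n, h 0 k ^ 2 + ∑ i ∈ Ico 1 n, ∑ j ∈ Ico 1 n, h i j ^ 2 := by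
  have hrow : ∀ i, ∑ j ∈ range n, h i j ^ 2 = h 0 i ^ 2 + ∑ j ∈ Ico 1 n, h i j ^ 2 := fun i ↦ by
    rw [sum_range_eq_add_Ico _ hn, hsymm i 0]
  simp only [hrow, sum_range_eq_add_Ico _ hn, sum_add_distrib]
  ring

lemma first_row_bound {m a P Q t : ℝ} (hm : 2 ≤ m) (hP : 0 ≤ P) (ht : t ^ 2 ≤ m * Q) :
    2 * P - a * t ≤ m / 2 * (a ^ 2 + 2 * P + Q - (a + t) ^ 2 / m) := by
  have hm0 : m ≠ 0 := by positivity
  have key : 0 ≤ (m - 1) * a ^ 2 + 2 * (m - 2) * P + (m * Q - t ^ 2) := by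
    have : 0 ≤ (m - 1) * a ^ 2 := mul_nonneg (by linarith) (sq_nonneg a)
    have : 0 ≤ (m - 2) * P := mul_nonneg (by linarith) hP
    linarith
  have expand : m / 2 * (a ^ 2 + 2 * P + Q - (a + t) ^ 2 / m)
      = 2 * P - a * t + ((m - 1) * a ^ 2 + 2 * (m - 2) * P + (m * Q - t ^ 2)) / 2 := by
    field_simp
    ring
  linarith

theorem stmt_9 (n : ℕ) (hn : 3 ≤ n) (h : ℕ → ℕ → ℝ)
    (hsymm : ∀ i j, h i j = h j i)
    (T S : ℝ)
    (hT : T = ∑ i ∈ Finset.range n, h i i)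
    (hS : S = ∑ i ∈ Finset.range n, ∑ j ∈ Finset.range n, (h i j) ^ 2) :
    ∑ k ∈ Finset.Ico 1 n, (2 * (h 0 k) ^ 2 - h 0 0 * h k k)
      ≤ (((n : ℝ) - 1) / 2) * (S - T ^ 2 / ((n : ℝ) - 1)) := by
  have hn0 : 0 < n := by omega
  have hcard : (#(Ico 1 n) : ℝ) = n - 1 := by
    rw [Nat.card_Ico, Nat.cast_sub (by omega : 1 ≤ n), Nat.cast_one]
  have hm : (2 : ℝ) ≤ n - 1 := by
    have : (3 : ℝ) ≤ n := by exact_mod_cast hn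
    linarith
  have hblock := sq_sum_diag_le_card_mul_sum_sq (Ico 1 n) h
  rw [hcard] at hblock
  rw [hS, hT, sum_sq_eq_corner_add_border_add_block hn0 h hsymm, sum_range_eq_add_Ico _ hn0,
    sum_sub_distrib, ← mul_sum, ← mul_sum]
  exact first_row_bound hm (sum_nonneg fun _ _ ↦ sq_nonneg _) hblock
end

section
/- Let n ≥ 4 and let h = (h_{ij}) be a real symmetric n×n matrix with trace T = ∑_i h_{ii} and squared norm S = ∑_{i,j} h_{ij}². Then for all real numbers λ, μ ∈ [−1, 1]: h_{11}h_{33} − h_{13}² + μ²λ²(h_{22}h_{44} − h_{24}²) + μ²(h_{22}h_{33} − h_{23}²) + λ²(h_{11}h_{44} − h_{14}²) + 2μλ·h_{14}h_{23} − 2μλ·h_{13}h_{24} ≥ (1 + λ² + μ² + λ²μ²)·(T²/(2(n−1)) − S/2). -/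
/-!
Cauchy–Schwarz applied to the diagonal of `h` after merging two entries `k ≠ l` gives
`2 h_kk h_ll ≥ T² / (n - 1) - ∑ h_ii²`; since `S = ∑ h_ii² + 2 ∑_{i<j} h_ij²` by symmetry,
each of the four diagonal products dominates `T² / (2(n - 1)) - S / 2 + h₀₂² + h₁₃² + h₁₂² + h₀₃²`. Weighting these bounds by
`1, m²l², m², l²`, the spare off-diagonal squares, multiplied by `(1 + l²)(1 + m²)`, absorb the
subtracted squares together with the cross terms `2ml(h₀₃h₁₂ - h₀₂h₁₃)`.
-/

open Finset

theorem sq_sum_le_card_sub_one_mul_sum_sq_add {ι α : Type*} [DecidableEq ι] [CommRing α]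
    [LinearOrder α] [IsStrictOrderedRing α] {s : Finset ι} (a : ι → α) {k l : ι}
    (hk : k ∈ s) (hl : l ∈ s) (hkl : k ≠ l) :
    (∑ i ∈ s, a i) ^ 2 ≤ (#s - 1 : α) * (∑ i ∈ s, a i ^ 2 + 2 * a k * a l) := by
  have hk' : k ∈ s.erase l := mem_erase.2 ⟨hkl, hk⟩
  -- merging the entries `k` and `l` leaves the sum unchanged and adds `2 a k a l` to the squares
  have hCS := sq_sum_le_card_mul_sum_sq (s := s.erase l) (f := Function.update a k (a k + a l))
  have hsum : ∑ i ∈ s.erase l, Function.update a k (a k + a l) i = ∑ i ∈ s, a i := by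
    rw [sum_update_of_mem hk', ← add_sum_erase s a hl, ← add_sum_erase _ a hk',
      sdiff_singleton_eq_erase]
    ring
  have hsq : ∑ i ∈ s.erase l, Function.update a k (a k + a l) i ^ 2
      = ∑ i ∈ s, a i ^ 2 + 2 * a k * a l := by
    simp_rw [Function.apply_update (fun _ x => x ^ 2) a k (a k + a l)]
    rw [sum_update_of_mem hk', ← add_sum_erase s _ hl, ← add_sum_erase _ (fun i => a i ^ 2) hk',
      sdiff_singleton_eq_erase]
    ring
  rwa [hsum, hsq, card_erase_of_mem hl, Nat.cast_sub (card_pos.2 ⟨l, hl⟩), Nat.cast_one] at hCS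

theorem sq_sum_div_sub_sum_sq_le_mul {ι α : Type*} [DecidableEq ι] [Field α] [LinearOrder α]
    [IsStrictOrderedRing α] {s : Finset ι} (a : ι → α) {k l : ι} (hk : k ∈ s) (hl : l ∈ s)
    (hkl : k ≠ l) :
    (∑ i ∈ s, a i) ^ 2 / (2 * (#s - 1 : α)) - (∑ i ∈ s, a i ^ 2) / 2 ≤ a k * a l := by
  have hcard : (1 : α) < #s := by exact_mod_cast one_lt_card.2 ⟨k, hk, l, hl, hkl⟩
  rw [sub_le_iff_le_add, div_le_iff₀ (by linarith)]
  linarith [sq_sum_le_card_sub_one_mul_sum_sq_add a hk hl hkl]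

theorem sum_sq_diag_add_sum_sq_le {ι α : Type*} [DecidableEq ι] [CommRing α]
    [LinearOrder α] [IsStrictOrderedRing α] (s : Finset ι) (h : ι → ι → α)
    {t : Finset (ι × ι)} (ht : t ⊆ s.offDiag) :
    ∑ i ∈ s, h i i ^ 2 + ∑ p ∈ t, h p.1 p.2 ^ 2 ≤ ∑ i ∈ s, ∑ j ∈ s, h i j ^ 2 := by
  rw [← sum_product' (f := fun i j => h i j ^ 2), ← diag_union_offDiag,
    sum_union (disjoint_diag_offDiag s), sum_diag]
  gcongr

theorem sq_add_cross_le_mul_sum_sq {α : Type*} [CommRing α] [LinearOrder α]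
    [IsStrictOrderedRing α] (l m p q r s : α) :
    p ^ 2 + m ^ 2 * l ^ 2 * q ^ 2 + m ^ 2 * r ^ 2 + l ^ 2 * s ^ 2 + 2 * m * l * (p * q - s * r)
      ≤ (1 + l ^ 2) * (1 + m ^ 2) * (p ^ 2 + q ^ 2 + r ^ 2 + s ^ 2) := by
  -- the cross terms are absorbed by `(m p - l q) ^ 2` and `(s + m l r) ^ 2`
  nlinarith [sq_nonneg (m * p - l * q), sq_nonneg (s + m * l * r), sq_nonneg (l * p),
    sq_nonneg (l * m * p), sq_nonneg q, sq_nonneg (m * q), sq_nonneg r, sq_nonneg (l * r),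
    sq_nonneg (m * s), sq_nonneg (l * m * s)]

theorem stmt_15_general (n : ℕ) (hn : 4 ≤ n) (h : ℕ → ℕ → ℝ)
    (hsymm : ∀ i j, h i j = h j i)
    (T S : ℝ)
    (hT : T = ∑ i ∈ Finset.range n, h i i)
    (hS : S = ∑ i ∈ Finset.range n, ∑ j ∈ Finset.range n, (h i j) ^ 2)
    (l m : ℝ) :
    h 0 0 * h 2 2 - (h 0 2) ^ 2
      + m ^ 2 * l ^ 2 * (h 1 1 * h 3 3 - (h 1 3) ^ 2)
      + m ^ 2 * (h 1 1 * h 2 2 - (h 1 2) ^ 2)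
      + l ^ 2 * (h 0 0 * h 3 3 - (h 0 3) ^ 2)
      + 2 * m * l * (h 0 3 * h 1 2) - 2 * m * l * (h 0 2 * h 1 3)
      ≥ (1 + l ^ 2 + m ^ 2 + l ^ 2 * m ^ 2) * (T ^ 2 / (2 * ((n : ℝ) - 1)) - S / 2) := by
  set X := h 0 2 ^ 2 + h 1 3 ^ 2 + h 1 2 ^ 2 + h 0 3 ^ 2
  have hSX : ∑ i ∈ range n, h i i ^ 2 + 2 * X ≤ S := by
    let t : Finset (ℕ × ℕ) := {(0, 2), (2, 0), (1, 3), (3, 1), (1, 2), (2, 1), (0, 3), (3, 0)}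
    have ht : t ⊆ (range n).offDiag := by
      simp only [t, insert_subset_iff, singleton_subset_iff, mem_offDiag, mem_range]
      omega
    have hsum : ∑ p ∈ t, h p.1 p.2 ^ 2 = 2 * X := by
      simp (disch := decide) only [t, X, sum_insert, sum_singleton, hsymm 2 0, hsymm 3 1, hsymm 2 1,
        hsymm 3 0]
      ring
    rw [hS, ← hsum]
    exact sum_sq_diag_add_sum_sq_le (range n) h ht
  have hdiag : ∀ k j, k < n → j < n → k ≠ j →
      T ^ 2 / (2 * ((n : ℝ) - 1)) - S / 2 + X ≤ h k k * h j j := by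
    intro k j hk hj hkj
    have := sq_sum_div_sub_sum_sq_le_mul (fun i => h i i) (mem_range.2 hk) (mem_range.2 hj) hkj
    rw [card_range, ← hT] at this
    linarith
  have h02 := hdiag 0 2 (by omega) (by omega) (by omega)
  have h13 := hdiag 1 3 (by omega) (by omega) (by omega)
  have h12 := hdiag 1 2 (by omega) (by omega) (by omega)
  have h03 := hdiag 0 3 (by omega) (by omega) (by omega)
  have := sq_add_cross_le_mul_sum_sq l m (h 0 2) (h 1 3) (h 1 2) (h 0 3)
  linear_combination h02 + m ^ 2 * l ^ 2 * h13 + m ^ 2 * h12 + l ^ 2 * h03 + this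

theorem stmt_15 (n : ℕ) (hn : 4 ≤ n) (h : ℕ → ℕ → ℝ)
    (hsymm : ∀ i j, h i j = h j i)
    (T S : ℝ)
    (hT : T = ∑ i ∈ Finset.range n, h i i)
    (hS : S = ∑ i ∈ Finset.range n, ∑ j ∈ Finset.range n, (h i j) ^ 2)
    (l m : ℝ) (hl : l ∈ Set.Icc (-1 : ℝ) 1) (hm : m ∈ Set.Icc (-1 : ℝ) 1) :
    h 0 0 * h 2 2 - (h 0 2) ^ 2
      + m ^ 2 * l ^ 2 * (h 1 1 * h 3 3 - (h 1 3) ^ 2)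
      + m ^ 2 * (h 1 1 * h 2 2 - (h 1 2) ^ 2)
      + l ^ 2 * (h 0 0 * h 3 3 - (h 0 3) ^ 2)
      + 2 * m * l * (h 0 3 * h 1 2) - 2 * m * l * (h 0 2 * h 1 3)
      ≥ (1 + l ^ 2 + m ^ 2 + l ^ 2 * m ^ 2) * (T ^ 2 / (2 * ((n : ℝ) - 1)) - S / 2) :=
  stmt_15_general n hn h hsymm T S hT hS l m
end

section
/- Let n ≥ 4, q an integer with 1 < q < n−1, let h: {1,…,n}² → ℝ^m be symmetric (h_{ik} = h_{ki} as vectors), set S = ∑_{i,k} |h_{ik}|², H·n = |∑_i h_{ii}| where H = |(1/n)∑_i h_{ii}|. Then ∑_{k=q+1}^n ∑_{i=1}^q [2|h_{ik}|² − ⟨h_{ii}, h_{kk}⟩] ≤ (q(n−q)/n)·[S − 2nH² + (n(n−4)/√(2n(n−2)))·H·√(S − nH²)], provided S ≥ nH². -/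
/-!
Split `h = h̊ + (T / n) δ` with `T = ∑ hᵢᵢ` and `h̊` trace-free, so that `S - nH² = |h̊|²`.
With `P = ∑_{i<q} h̊ᵢᵢ` and `C = ∑_{i<q≤k} |hᵢₖ|²` the left-hand side equals
`2C + |P|² + ((2q - n)/n) ⟪P, T⟫ - q(n-q)H²`. The two mixed blocks and the diagonal of `h̊` give
`2C + ∑ |h̊ⱼⱼ|² ≤ |h̊|²`, and since `h̊` is trace-free, `P = -∑_{k≥q} h̊ₖₖ`, so Cauchy–Schwarz on
both diagonal blocks gives `n|P|² ≤ q(n-q) ∑ |h̊ⱼⱼ|²`. As `q(n-q) ≥ n`, this bounds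
`2C + |P|²` by `q(n-q)|h̊|²/n`; the term `⟪P, T⟫` is handled by Cauchy–Schwarz together with
`(2q-n)² · 2(n-2) ≤ q(n-q)(n-4)²`, which is `n²(q-2)(n-q-2) ≥ 0`.
-/

open Finset

open scoped RealInnerProductSpace

theorem norm_sum_sq_le_card_mul_sum_norm_sq {ι E : Type*} [SeminormedAddCommGroup E]
    (s : Finset ι) (v : ι → E) :
    ‖∑ i ∈ s, v i‖ ^ 2 ≤ #s * ∑ i ∈ s, ‖v i‖ ^ 2 :=
  (pow_le_pow_left₀ (norm_nonneg _) (norm_sum_le _ _) 2).trans (sq_sum_le_card_mul_sum_sq ..)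

theorem card_add_card_mul_norm_sum_sq_le {ι E : Type*} [SeminormedAddCommGroup E]
    {s t : Finset ι} {v : ι → E} (hv : ∑ i ∈ s, v i + ∑ i ∈ t, v i = 0) :
    (#s + #t) * ‖∑ i ∈ s, v i‖ ^ 2 ≤ #s * #t * (∑ i ∈ s, ‖v i‖ ^ 2 + ∑ i ∈ t, ‖v i‖ ^ 2) := by
  have hs := mul_le_mul_of_nonneg_left (norm_sum_sq_le_card_mul_sum_norm_sq s v)
    (Nat.cast_nonneg (α := ℝ) #t)
  have ht := mul_le_mul_of_nonneg_left (norm_sum_sq_le_card_mul_sum_norm_sq t v)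
    (Nat.cast_nonneg (α := ℝ) #s)
  rw [eq_neg_of_add_eq_zero_right hv, norm_neg] at ht
  linarith

theorem two_mul_sum_sum_add_sum_diag_le {ι : Type*} [DecidableEq ι] {s t : Finset ι}
    (hst : Disjoint s t) {f : ι → ι → ℝ} (hf : ∀ i k, 0 ≤ f i k) (hsymm : ∀ i k, f i k = f k i) :
    2 * ∑ k ∈ t, ∑ i ∈ s, f i k + ∑ j ∈ s ∪ t, f j j ≤ ∑ j ∈ s ∪ t, ∑ l ∈ s ∪ t, f j l := by
  have hdiag (u : Finset ι) : ∑ j ∈ u, f j j ≤ ∑ j ∈ u, ∑ l ∈ u, f j l :=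
    sum_le_sum fun j hj => single_le_sum (fun l _ => hf j l) hj
  have hst' : ∑ j ∈ s, ∑ l ∈ t, f j l = ∑ k ∈ t, ∑ i ∈ s, f i k := sum_comm
  have hts : ∑ j ∈ t, ∑ l ∈ s, f j l = ∑ k ∈ t, ∑ i ∈ s, f i k := by simp only [hsymm _ _]
  simp only [sum_union hst, sum_add_distrib]
  linarith [hdiag s, hdiag t]

section Traceless

variable {ι E : Type*} [NormedAddCommGroup E] [InnerProductSpace ℝ E] [DecidableEq ι]

noncomputable def tracelessPart (s : Finset ι) (h : ι → ι → E) (i k : ι) : E :=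
  h i k - if i = k then (#s : ℝ)⁻¹ • ∑ j ∈ s, h j j else 0

variable (s : Finset ι) (h : ι → ι → E)

theorem tracelessPart_of_ne {i k : ι} (hik : i ≠ k) : tracelessPart s h i k = h i k := by
  simp [tracelessPart, hik]

theorem tracelessPart_self (j : ι) :
    tracelessPart s h j j = h j j - (#s : ℝ)⁻¹ • ∑ j ∈ s, h j j := by
  simp [tracelessPart]

theorem tracelessPart_comm (hsymm : ∀ i k, h i k = h k i) (i k : ι) :
    tracelessPart s h i k = tracelessPart s h k i := by
  obtain rfl | hik := eq_or_ne i k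
  · rfl
  · rw [tracelessPart_of_ne s h hik, tracelessPart_of_ne s h hik.symm, hsymm]

theorem sum_tracelessPart_self (t : Finset ι) :
    ∑ j ∈ t, tracelessPart s h j j = ∑ j ∈ t, h j j - (#t / #s : ℝ) • ∑ j ∈ s, h j j := by
  simp only [tracelessPart_self, sum_sub_distrib, sum_const, ← Nat.cast_smul_eq_nsmul ℝ, smul_smul,
    div_eq_mul_inv]

theorem sum_tracelessPart_self_eq_zero : ∑ j ∈ s, tracelessPart s h j j = 0 := by
  rw [sum_tracelessPart_self]
  obtain hs | hs := s.eq_empty_or_nonempty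
  · simp [hs]
  · rw [div_self (by simpa using hs.ne_empty), one_smul, sub_self]

theorem sum_sum_norm_sq_tracelessPart :
    ∑ j ∈ s, ∑ l ∈ s, ‖tracelessPart s h j l‖ ^ 2
      = ∑ j ∈ s, ∑ l ∈ s, ‖h j l‖ ^ 2 - ‖∑ j ∈ s, h j j‖ ^ 2 / #s := by
  set T := ∑ j ∈ s, h j j
  have hrow (j) (hj : j ∈ s) : ∑ l ∈ s, ‖tracelessPart s h j l‖ ^ 2
      = ∑ l ∈ s, ‖h j l‖ ^ 2 + (‖tracelessPart s h j j‖ ^ 2 - ‖h j j‖ ^ 2) := by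
    rw [← sub_eq_iff_eq_add', ← sum_sub_distrib]
    exact sum_eq_single_of_mem j hj fun l _ hl => by rw [tracelessPart_of_ne s h hl.symm, sub_self]
  have hdiag (j) : ‖tracelessPart s h j j‖ ^ 2 - ‖h j j‖ ^ 2
      = (#s : ℝ)⁻¹ ^ 2 * ‖T‖ ^ 2 - 2 * (#s : ℝ)⁻¹ * ⟪h j j, T⟫ := by
    rw [tracelessPart_self, norm_sub_sq_real, real_inner_smul_right, norm_smul, mul_pow,
      Real.norm_eq_abs, sq_abs]
    ring
  rw [sum_congr rfl hrow, sum_add_distrib, sum_congr rfl fun j _ => hdiag j, sum_sub_distrib,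
    sum_const, ← mul_sum, ← sum_inner, real_inner_self_eq_norm_sq, nsmul_eq_mul]
  obtain hs | hs := s.eq_empty_or_nonempty
  · simp [hs]
  · have : (#s : ℝ) ≠ 0 := by simpa using hs.ne_empty
    field_simp
    ring

end Traceless

section Blocks

variable {ι E : Type*} [NormedAddCommGroup E] [InnerProductSpace ℝ E] [DecidableEq ι]
  {s t : Finset ι}

theorem two_mul_sum_sum_norm_sq_add_le_of_disjoint (hst : Disjoint s t)
    {h : ι → ι → E} (hsymm : ∀ i k, h i k = h k i) :
    2 * ∑ k ∈ t, ∑ i ∈ s, ‖h i k‖ ^ 2 + ∑ j ∈ s ∪ t, ‖tracelessPart (s ∪ t) h j j‖ ^ 2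
      ≤ ∑ j ∈ s ∪ t, ∑ l ∈ s ∪ t, ‖tracelessPart (s ∪ t) h j l‖ ^ 2 := by
  have hcross : ∑ k ∈ t, ∑ i ∈ s, ‖tracelessPart (s ∪ t) h i k‖ ^ 2
      = ∑ k ∈ t, ∑ i ∈ s, ‖h i k‖ ^ 2 :=
    sum_congr rfl fun k hk => sum_congr rfl fun i hi => by
      rw [tracelessPart_of_ne _ _ (by rintro rfl; exact disjoint_left.1 hst hi hk)]
  rw [← hcross]
  exact two_mul_sum_sum_add_sum_diag_le hst (fun _ _ => sq_nonneg _)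
    (fun i k => by rw [tracelessPart_comm _ _ hsymm])

theorem card_add_card_mul_norm_sum_tracelessPart_sq_le (h : ι → ι → E) (hst : Disjoint s t) :
    (#s + #t) * ‖∑ i ∈ s, tracelessPart (s ∪ t) h i i‖ ^ 2
      ≤ #s * #t * ∑ j ∈ s ∪ t, ‖tracelessPart (s ∪ t) h j j‖ ^ 2 := by
  rw [sum_union hst]
  refine card_add_card_mul_norm_sum_sq_le ?_
  rw [← sum_union hst, sum_tracelessPart_self_eq_zero]

theorem sum_sum_two_mul_sub_inner_eq (h : ι → ι → E) (hst : Disjoint s t) :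
    ∑ k ∈ t, ∑ i ∈ s, (2 * ‖h i k‖ ^ 2 - ⟪h i i, h k k⟫)
      = 2 * ∑ k ∈ t, ∑ i ∈ s, ‖h i k‖ ^ 2
        - ⟪∑ i ∈ s, tracelessPart (s ∪ t) h i i + (#s / #(s ∪ t) : ℝ) • ∑ j ∈ s ∪ t, h j j,
            (#t / #(s ∪ t) : ℝ) • ∑ j ∈ s ∪ t, h j j - ∑ i ∈ s, tracelessPart (s ∪ t) h i i⟫ := by
  set P := ∑ i ∈ s, tracelessPart (s ∪ t) h i i with hP
  set T := ∑ j ∈ s ∪ t, h j j with hT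
  have hs : ∑ i ∈ s, h i i = P + (#s / #(s ∪ t) : ℝ) • T := by
    rw [hP, sum_tracelessPart_self, sub_add_cancel]
  have ht : ∑ k ∈ t, h k k = (#t / #(s ∪ t) : ℝ) • T - P := by
    have htrace : P + ∑ k ∈ t, tracelessPart (s ∪ t) h k k = 0 := by
      rw [hP, ← sum_union hst, sum_tracelessPart_self_eq_zero]
    have := sum_tracelessPart_self (s ∪ t) h t
    rw [← hT, eq_neg_of_add_eq_zero_right htrace] at this
    linear_combination (norm := module) -this
  rw [← hs, ← ht, inner_sum]
  simp only [sum_inner, sum_sub_distrib, mul_sum]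

end Blocks

theorem two_mul_sub_two_le_mul_sub {n q : ℝ} (hq : 2 ≤ q) (hqn : q + 2 ≤ n) :
    2 * (n - 2) ≤ q * (n - q) := by
  nlinarith [mul_nonneg (sub_nonneg.2 hq) (sub_nonneg.2 hqn)]

theorem sq_two_mul_sub_mul_le {n q : ℝ} (hq : 2 ≤ q) (hqn : q + 2 ≤ n) :
    (2 * q - n) ^ 2 * (2 * (n - 2)) ≤ q * (n - q) * (n - 4) ^ 2 := by
  nlinarith [mul_le_mul_of_nonneg_left (two_mul_sub_two_le_mul_sub hq hqn) (sq_nonneg n)]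

section Estimate

variable {E : Type*} [NormedAddCommGroup E] [InnerProductSpace ℝ E]

theorem mul_inner_le_of_mul_norm_sq_le {n q σ : ℝ} (hq : 2 ≤ q) (hqn : q + 2 ≤ n) {P : E}
    (hP : n * ‖P‖ ^ 2 ≤ q * (n - q) * σ) (T : E) :
    (2 * q - n) * ⟪P, T⟫ ≤ q * (n - q) * (n - 4) / √(2 * n * (n - 2)) * ‖T‖ * √σ := by
  have hX := two_mul_sub_two_le_mul_sub hq hqn
  have hpos : 0 < 2 * n * (n - 2) := by nlinarith
  have hs : 0 < √(2 * n * (n - 2)) := Real.sqrt_pos.2 hpos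
  have hσ : 0 ≤ σ :=
    nonneg_of_mul_nonneg_right (hP.trans' (mul_nonneg (by linarith) (sq_nonneg _))) (by linarith)
  have hPσ : |2 * q - n| * ‖P‖ * √(2 * n * (n - 2)) ≤ q * (n - q) * (n - 4) * √σ := by
    refine (pow_le_pow_iff_left₀ (by positivity) (mul_nonneg (mul_nonneg (by linarith)
      (by linarith)) (Real.sqrt_nonneg σ)) two_ne_zero).1 ?_
    calc (|2 * q - n| * ‖P‖ * √(2 * n * (n - 2))) ^ 2
        = (2 * q - n) ^ 2 * (2 * (n - 2)) * (n * ‖P‖ ^ 2) := by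
          rw [mul_pow, mul_pow, sq_abs, Real.sq_sqrt hpos.le]; ring
      _ ≤ q * (n - q) * (n - 4) ^ 2 * (q * (n - q) * σ) :=
          mul_le_mul (sq_two_mul_sub_mul_le hq hqn) hP
            (mul_nonneg (by linarith) (sq_nonneg _)) (by nlinarith)
      _ = (q * (n - q) * (n - 4) * √σ) ^ 2 := by
          rw [mul_pow, Real.sq_sqrt hσ]; ring
  calc (2 * q - n) * ⟪P, T⟫ ≤ |2 * q - n| * (‖P‖ * ‖T‖) :=
        (le_abs_self _).trans <| (abs_mul _ _).trans_le <|
          mul_le_mul_of_nonneg_left (abs_real_inner_le_norm P T) (abs_nonneg _)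
    _ ≤ _ := by
      rw [div_mul_eq_mul_div, div_mul_eq_mul_div, le_div_iff₀ hs]
      nlinarith [mul_le_mul_of_nonneg_right hPσ (norm_nonneg T)]

theorem two_mul_sub_inner_le {n q C Δ σ S H : ℝ} (hq : 2 ≤ q) (hqn : q + 2 ≤ n) (hC : 0 ≤ C)
    (hblock : 2 * C + Δ ≤ σ) {P T : E} (hP : n * ‖P‖ ^ 2 ≤ q * (n - q) * Δ)
    (hσ : S - n * H ^ 2 = σ) (hT : ‖T‖ = n * H) :
    2 * C - ⟪P + (q / n) • T, ((n - q) / n) • T - P⟫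
      ≤ q * (n - q) / n *
          (S - 2 * n * H ^ 2 + n * (n - 4) / √(2 * n * (n - 2)) * H * √(S - n * H ^ 2)) := by
  have hn : 0 < n := by linarith
  have hX := two_mul_sub_two_le_mul_sub hq hqn
  have hΔσ : Δ ≤ σ := by linarith
  have hE1 : n * (2 * C + ‖P‖ ^ 2) ≤ q * (n - q) * σ := by
    nlinarith [mul_le_mul_of_nonneg_left hΔσ (by linarith : 0 ≤ q * (n - q)),
      mul_nonneg hC (by linarith : 0 ≤ q * (n - q) - n)]
  have hE2 := mul_inner_le_of_mul_norm_sq_le hq hqn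
    (hP.trans (mul_le_mul_of_nonneg_left hΔσ (by linarith))) T
  have hinner : ⟪P + (q / n) • T, ((n - q) / n) • T - P⟫
      = ((n - 2 * q) / n) * ⟪P, T⟫ - ‖P‖ ^ 2 + q * (n - q) / n ^ 2 * ‖T‖ ^ 2 := by
    simp only [inner_add_left, inner_sub_right, real_inner_smul_left, real_inner_smul_right,
      real_inner_self_eq_norm_sq, real_inner_comm T P]
    field_simp
    ring
  calc 2 * C - ⟪P + (q / n) • T, ((n - q) / n) • T - P⟫
      = (n * (2 * C + ‖P‖ ^ 2) + (2 * q - n) * ⟪P, T⟫) / n - q * (n - q) * H ^ 2 := by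
        rw [hinner, hT]; field_simp; ring
    _ ≤ (q * (n - q) * σ + q * (n - q) * (n - 4) / √(2 * n * (n - 2)) * ‖T‖ * √σ) / n
          - q * (n - q) * H ^ 2 := by
        gcongr
    _ = _ := by
        rw [hT, ← hσ]; field_simp; ring

end Estimate

theorem stmt_17_general (E : Type*) [NormedAddCommGroup E] [InnerProductSpace ℝ E]
    (n q : ℕ) (hq1 : 1 < q) (hq2 : q < n - 1)
    (h : ℕ → ℕ → E) (hsymm : ∀ i k, h i k = h k i)
    (S H : ℝ)
    (hS : S = ∑ i ∈ Finset.range n, ∑ k ∈ Finset.range n, ‖h i k‖ ^ 2)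
    (hH : H = ‖∑ i ∈ Finset.range n, h i i‖ / n) :
    ∑ k ∈ Finset.Ico q n, ∑ i ∈ Finset.range q, (2 * ‖h i k‖ ^ 2 - ⟪h i i, h k k⟫)
      ≤ ((q : ℝ) * ((n : ℝ) - q) / n) *
          (S - 2 * n * H ^ 2 +
            ((n : ℝ) * ((n : ℝ) - 4) / Real.sqrt (2 * n * ((n : ℝ) - 2))) * H *
              Real.sqrt (S - n * H ^ 2)) := by
  have hqn : q ≤ n := by omega
  have hn0 : (n : ℝ) ≠ 0 := by norm_cast; omega
  have hrange : range q ∪ Ico q n = range n := by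
    rw [range_eq_Ico, Ico_union_Ico_eq_Ico (Nat.zero_le q) hqn, range_eq_Ico]
  have hdisj : Disjoint (range q) (Ico q n) := by
    rw [range_eq_Ico]; exact Ico_disjoint_Ico_consecutive 0 q n
  have hcard : (#(Ico q n) : ℝ) = n - q := by rw [Nat.card_Ico, Nat.cast_sub hqn]
  have hblock := two_mul_sum_sum_norm_sq_add_le_of_disjoint hdisj hsymm
  have hdiag := card_add_card_mul_norm_sum_tracelessPart_sq_le h hdisj
  rw [sum_sum_two_mul_sub_inner_eq h hdisj]
  simp only [hrange, card_range, hcard, add_sub_cancel] at hblock hdiag ⊢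
  refine two_mul_sub_inner_le (by exact_mod_cast hq1) (by norm_cast; omega) (by positivity)
    hblock hdiag ?_ ?_
  · rw [sum_sum_norm_sq_tracelessPart, hS, hH, card_range]; field_simp
  · rw [hH]; field_simp

open scoped RealInnerProductSpace in
theorem stmt_17 (E : Type*) [NormedAddCommGroup E] [InnerProductSpace ℝ E]
    (n q : ℕ) (hn : 4 ≤ n) (hq1 : 1 < q) (hq2 : q < n - 1)
    (h : ℕ → ℕ → E) (hsymm : ∀ i k, h i k = h k i)
    (S H : ℝ)
    (hS : S = ∑ i ∈ Finset.range n, ∑ k ∈ Finset.range n, ‖h i k‖ ^ 2)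
    (hH : H = ‖∑ i ∈ Finset.range n, h i i‖ / n)
    (hSH : (n : ℝ) * H ^ 2 ≤ S) :
    ∑ k ∈ Finset.Ico q n, ∑ i ∈ Finset.range q, (2 * ‖h i k‖ ^ 2 - ⟪h i i, h k k⟫)
      ≤ ((q : ℝ) * ((n : ℝ) - q) / n) *
          (S - 2 * n * H ^ 2 +
            ((n : ℝ) * ((n : ℝ) - 4) / Real.sqrt (2 * n * ((n : ℝ) - 2))) * H *
              Real.sqrt (S - n * H ^ 2)) :=
  stmt_17_general E n q hq1 hq2 h hsymm S H hS hH
end
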